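/- arXiv:2509.16450 — 5 statements merged into one kernel-verified Lean document; each statement's English description precedes it below -/
import Mathlib

section
/- There exists a data-exchange instance with n = 3 agents, in which every payoff function p_i is continuous, convex, and monotone with p_i(0) = 0 and every cost function c_i is continuous, convex, and monotone with c_i(0) = 0, such that no core-stable data exchange exists. Hence relaxing concavity of the payoff functions can destroy existence of core-stable exchanges even when costs are convex. -/
open scoped BigOperators

namespace DataExchange

/-- The unit box `[0,1]^n` inside `Fin n → ℝ` (payoff/cost functions live on it;
the coordinate corresponding to the agent herself is always `0`, so this models
`[0,1]^{n-1}`). -/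
def box (n : ℕ) : Set (Fin n → ℝ) := Set.Icc 0 1

/-- A data exchange among `n` agents: a matrix with entries in `[0,1]` and zero diagonal. -/
def IsExchange {n : ℕ} (x : Fin n → Fin n → ℝ) : Prop :=
  (∀ i j, 0 ≤ x i j ∧ x i j ≤ 1) ∧ ∀ i, x i i = 0

/-- The incoming bundle `x_{-i} = (x_{j,i})_j` of agent `i`. -/
def incoming {n : ℕ} (x : Fin n → Fin n → ℝ) (i : Fin n) : Fin n → ℝ := fun j => x j i

/-- The outgoing bundle `x_i = (x_{i,j})_j` of agent `i`. -/
def outgoing {n : ℕ} (x : Fin n → Fin n → ℝ) (i : Fin n) : Fin n → ℝ := fun j => x i j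

/-- The utility of agent `i`: payoff on the incoming bundle minus cost of the outgoing bundle. -/
def utility {n : ℕ} (p c : Fin n → (Fin n → ℝ) → ℝ) (x : Fin n → Fin n → ℝ) (i : Fin n) : ℝ :=
  p i (incoming x i) - c i (outgoing x i)

/-- An exchange over a coalition `U`: a data exchange that is zero outside `U × U`. -/
def IsExchangeOver {n : ℕ} (U : Set (Fin n)) (x : Fin n → Fin n → ℝ) : Prop :=
  IsExchange x ∧ ∀ i j, (i ∉ U ∨ j ∉ U) → x i j = 0

/-- A data exchange is core-stable if no nonempty coalition `U` admits an exchange over `U`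
that strictly improves the utility of every member of `U`. -/
def CoreStable {n : ℕ} (p c : Fin n → (Fin n → ℝ) → ℝ) (x : Fin n → Fin n → ℝ) : Prop :=
  ¬ ∃ (U : Set (Fin n)) (y : Fin n → Fin n → ℝ), U.Nonempty ∧ IsExchangeOver U y ∧
      ∀ i ∈ U, utility p c x i < utility p c y i

/-- `α`-core-stability: no nonempty coalition can improve everyone's utility by more than `α`. -/
def ApproxCoreStable {n : ℕ} (α : ℝ) (p c : Fin n → (Fin n → ℝ) → ℝ)
    (x : Fin n → Fin n → ℝ) : Prop :=
  ¬ ∃ (U : Set (Fin n)) (y : Fin n → Fin n → ℝ), U.Nonempty ∧ IsExchangeOver U y ∧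
      ∀ i ∈ U, utility p c x i + α < utility p c y i

/-- Monotone (nondecreasing in every coordinate) on the unit box. -/
def MonotoneOnBox {n : ℕ} (f : (Fin n → ℝ) → ℝ) : Prop :=
  ∀ a ∈ box n, ∀ b ∈ box n, a ≤ b → f a ≤ f b

noncomputable def ramp (t : ℝ) : ℝ := max 0 (2 * t - 1)
noncomputable def pen (t : ℝ) : ℝ := max 0 (t - 1)

lemma ramp_nonneg (t : ℝ) : 0 ≤ ramp t := le_max_left _ _
lemma ramp_ge (t : ℝ) : 2 * t - 1 ≤ ramp t := le_max_right _ _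
lemma pen_nonneg (t : ℝ) : 0 ≤ pen t := le_max_left _ _
lemma pen_ge (t : ℝ) : t - 1 ≤ pen t := le_max_right _ _
lemma ramp_zero : ramp 0 = 0 := by norm_num [ramp]
lemma pen_zero : pen 0 = 0 := by norm_num [pen]
lemma ramp_one : ramp 1 = 1 := by norm_num [ramp]
lemma pen_one : pen 1 = 0 := by norm_num [pen]
lemma ramp_cont : Continuous ramp := by
  unfold ramp; exact continuous_const.max (by continuity)
lemma pen_cont : Continuous pen := by
  unfold pen; exact continuous_const.max (by continuity)
lemma ramp_mono : Monotone ramp := fun a b hab => max_le_max le_rfl (by linarith)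
lemma pen_mono : Monotone pen := fun a b hab => max_le_max le_rfl (by linarith)

noncomputable def Pf : Fin 3 → (Fin 3 → ℝ) → ℝ :=
  ![fun a => 4 * ramp (a 1) + 9 * ramp (a 2),
    fun a => 4 * ramp (a 0) + 7 * ramp (a 2),
    fun a => 6 * ramp (a 0) + 5 * ramp (a 1)]

noncomputable def Cf : Fin 3 → (Fin 3 → ℝ) → ℝ :=
  ![fun a => 2 * a 1 + 8 * a 2 + 20 * pen (a 0 + a 1 + a 2),
    fun a => 3 * a 0 + 5 * a 2 + 20 * pen (a 0 + a 1 + a 2),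
    fun a => 4 * a 0 + 4 * a 1 + 20 * pen (a 0 + a 1 + a 2)]

lemma Pf0 (a : Fin 3 → ℝ) : Pf 0 a = 4 * ramp (a 1) + 9 * ramp (a 2) := rfl
lemma Pf1 (a : Fin 3 → ℝ) : Pf 1 a = 4 * ramp (a 0) + 7 * ramp (a 2) := rfl
lemma Pf2 (a : Fin 3 → ℝ) : Pf 2 a = 6 * ramp (a 0) + 5 * ramp (a 1) := rfl
lemma Cf0 (a : Fin 3 → ℝ) : Cf 0 a = 2 * a 1 + 8 * a 2 + 20 * pen (a 0 + a 1 + a 2) := rfl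
lemma Cf1 (a : Fin 3 → ℝ) : Cf 1 a = 3 * a 0 + 5 * a 2 + 20 * pen (a 0 + a 1 + a 2) := rfl
lemma Cf2 (a : Fin 3 → ℝ) : Cf 2 a = 4 * a 0 + 4 * a 1 + 20 * pen (a 0 + a 1 + a 2) := rfl

lemma fin3_cases (i : Fin 3) : i = 0 ∨ i = 1 ∨ i = 2 := by omega

lemma Pf_zero : ∀ i, Pf i 0 = 0 := by
  intro i
  rcases fin3_cases i with rfl | rfl | rfl <;>
    simp [Pf0, Pf1, Pf2, Pi.zero_apply, ramp_zero]

lemma Cf_zero : ∀ i, Cf i 0 = 0 := by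
  intro i
  rcases fin3_cases i with rfl | rfl | rfl <;>
    simp [Cf0, Cf1, Cf2, Pi.zero_apply, pen_zero]

lemma Pf_cont : ∀ i, ContinuousOn (Pf i) (box 3) := by
  intro i
  apply Continuous.continuousOn
  have c0 : Continuous fun a : Fin 3 → ℝ => ramp (a 0) := ramp_cont.comp (continuous_apply 0)
  have c1 : Continuous fun a : Fin 3 → ℝ => ramp (a 1) := ramp_cont.comp (continuous_apply 1)
  have c2 : Continuous fun a : Fin 3 → ℝ => ramp (a 2) := ramp_cont.comp (continuous_apply 2)
  rcases fin3_cases i with rfl | rfl | rfl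
  · exact ((continuous_const.mul c1).add (continuous_const.mul c2)).congr fun a => (Pf0 a).symm
  · exact ((continuous_const.mul c0).add (continuous_const.mul c2)).congr fun a => (Pf1 a).symm
  · exact ((continuous_const.mul c0).add (continuous_const.mul c1)).congr fun a => (Pf2 a).symm

lemma Cf_cont : ∀ i, ContinuousOn (Cf i) (box 3) := by
  intro i
  apply Continuous.continuousOn
  have a0 : Continuous fun a : Fin 3 → ℝ => a 0 := continuous_apply 0
  have a1 : Continuous fun a : Fin 3 → ℝ => a 1 := continuous_apply 1
  have a2 : Continuous fun a : Fin 3 → ℝ => a 2 := continuous_apply 2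
  have cp : Continuous fun a : Fin 3 → ℝ => pen (a 0 + a 1 + a 2) :=
    pen_cont.comp ((a0.add a1).add a2)
  rcases fin3_cases i with rfl | rfl | rfl
  · exact (((continuous_const.mul a1).add (continuous_const.mul a2)).add
      (continuous_const.mul cp)).congr fun a => (Cf0 a).symm
  · exact (((continuous_const.mul a0).add (continuous_const.mul a2)).add
      (continuous_const.mul cp)).congr fun a => (Cf1 a).symm
  · exact (((continuous_const.mul a0).add (continuous_const.mul a1)).add
      (continuous_const.mul cp)).congr fun a => (Cf2 a).symm

lemma Pf_mono : ∀ i, MonotoneOnBox (Pf i) := by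
  intro i a _ b _ hab
  have h0 := ramp_mono (hab 0)
  have h1 := ramp_mono (hab 1)
  have h2 := ramp_mono (hab 2)
  rcases fin3_cases i with rfl | rfl | rfl <;>
    simp only [Pf0, Pf1, Pf2] <;> linarith

lemma Cf_mono : ∀ i, MonotoneOnBox (Cf i) := by
  intro i a _ b _ hab
  have h0 := hab 0
  have h1 := hab 1
  have h2 := hab 2
  have hp := pen_mono (show a 0 + a 1 + a 2 ≤ b 0 + b 1 + b 2 by linarith)
  rcases fin3_cases i with rfl | rfl | rfl <;>
    simp only [Cf0, Cf1, Cf2] <;> linarith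

lemma Pf_nonneg : ∀ i, ∀ a ∈ box 3, 0 ≤ Pf i a := by
  intro i a _
  have h0 := ramp_nonneg (a 0)
  have h1 := ramp_nonneg (a 1)
  have h2 := ramp_nonneg (a 2)
  rcases fin3_cases i with rfl | rfl | rfl <;>
    simp only [Pf0, Pf1, Pf2] <;> linarith

lemma Cf_nonneg : ∀ i, ∀ a ∈ box 3, 0 ≤ Cf i a := by
  intro i a ha
  have h0 : (0 : Fin 3 → ℝ) 0 ≤ a 0 := ha.1 0
  have h1 : (0 : Fin 3 → ℝ) 1 ≤ a 1 := ha.1 1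
  have h2 : (0 : Fin 3 → ℝ) 2 ≤ a 2 := ha.1 2
  simp only [Pi.zero_apply] at h0 h1 h2
  have hp := pen_nonneg (a 0 + a 1 + a 2)
  rcases fin3_cases i with rfl | rfl | rfl <;>
    simp only [Cf0, Cf1, Cf2] <;> linarith


lemma max_combo {a b A B : ℝ} (ha : 0 ≤ a) (hb : 0 ≤ b) :
    max 0 (a * A + b * B) ≤ a * max 0 A + b * max 0 B := by
  apply max_le
  · have h1 : 0 ≤ a * max 0 A := mul_nonneg ha (le_max_left _ _)
    have h2 : 0 ≤ b * max 0 B := mul_nonneg hb (le_max_left _ _)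
    linarith
  · exact add_le_add (mul_le_mul_of_nonneg_left (le_max_right _ _) ha)
      (mul_le_mul_of_nonneg_left (le_max_right _ _) hb)

lemma ramp_cvx {a b u v : ℝ} (ha : 0 ≤ a) (hb : 0 ≤ b) (hab : a + b = 1) :
    ramp (a * u + b * v) ≤ a * ramp u + b * ramp v := by
  have e : 2 * (a * u + b * v) - 1 = a * (2 * u - 1) + b * (2 * v - 1) := by
    linear_combination hab
  unfold ramp
  rw [e]
  exact max_combo ha hb

lemma pen_cvx {a b u v : ℝ} (ha : 0 ≤ a) (hb : 0 ≤ b) (hab : a + b = 1) :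
    pen (a * u + b * v) ≤ a * pen u + b * pen v := by
  have e : (a * u + b * v) - 1 = a * (u - 1) + b * (v - 1) := by
    linear_combination hab
  unfold pen
  rw [e]
  exact max_combo ha hb

lemma boxConvex : Convex ℝ (box 3) := by
  intro u hu v hv a b ha hb hab
  constructor
  · intro j
    have h1 : (0 : Fin 3 → ℝ) j ≤ u j := hu.1 j
    have h2 : (0 : Fin 3 → ℝ) j ≤ v j := hv.1 j
    simp only [Pi.zero_apply] at h1 h2 ⊢
    show (0:ℝ) ≤ a * u j + b * v j
    nlinarith
  · intro j
    have h1 : u j ≤ (1 : Fin 3 → ℝ) j := hu.2 j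
    have h2 : v j ≤ (1 : Fin 3 → ℝ) j := hv.2 j
    have h1' : (0 : Fin 3 → ℝ) j ≤ u j := hu.1 j
    have h2' : (0 : Fin 3 → ℝ) j ≤ v j := hv.1 j
    simp only [Pi.zero_apply, Pi.one_apply] at h1 h2 h1' h2' ⊢
    show a * u j + b * v j ≤ (1:ℝ)
    nlinarith

lemma pcvx_helper (k1 k2 : ℝ) (hk1 : 0 ≤ k1) (hk2 : 0 ≤ k2) (j1 j2 : Fin 3) :
    ConvexOn ℝ (box 3) (fun a : Fin 3 → ℝ => k1 * ramp (a j1) + k2 * ramp (a j2)) := by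
  refine ⟨boxConvex, fun u _ v _ a b ha hb hab => ?_⟩
  simp only [Pi.add_apply, Pi.smul_apply, smul_eq_mul]
  have r1 := ramp_cvx (u := u j1) (v := v j1) ha hb hab
  have r2 := ramp_cvx (u := u j2) (v := v j2) ha hb hab
  nlinarith [mul_le_mul_of_nonneg_left r1 hk1, mul_le_mul_of_nonneg_left r2 hk2]

lemma ccvx_helper (k1 k2 : ℝ) (hk1 : 0 ≤ k1) (hk2 : 0 ≤ k2) (j1 j2 : Fin 3) :
    ConvexOn ℝ (box 3)
      (fun a : Fin 3 → ℝ => k1 * a j1 + k2 * a j2 + 20 * pen (a 0 + a 1 + a 2)) := by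
  refine ⟨boxConvex, fun u _ v _ a b ha hb hab => ?_⟩
  simp only [Pi.add_apply, Pi.smul_apply, smul_eq_mul]
  have pc := pen_cvx (u := u 0 + u 1 + u 2) (v := v 0 + v 1 + v 2) ha hb hab
  have e : a * u 0 + b * v 0 + (a * u 1 + b * v 1) + (a * u 2 + b * v 2)
      = a * (u 0 + u 1 + u 2) + b * (v 0 + v 1 + v 2) := by ring
  rw [e]
  nlinarith [pc]

lemma Pf_convex : ∀ i, ConvexOn ℝ (box 3) (Pf i) := by
  intro i
  rcases fin3_cases i with rfl | rfl | rfl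
  · exact pcvx_helper 4 9 (by norm_num) (by norm_num) 1 2
  · exact pcvx_helper 4 7 (by norm_num) (by norm_num) 0 2
  · exact pcvx_helper 6 5 (by norm_num) (by norm_num) 0 1

lemma Cf_convex : ∀ i, ConvexOn ℝ (box 3) (Cf i) := by
  intro i
  rcases fin3_cases i with rfl | rfl | rfl
  · exact ccvx_helper 2 8 (by norm_num) (by norm_num) 1 2
  · exact ccvx_helper 3 5 (by norm_num) (by norm_num) 0 2
  · exact ccvx_helper 4 4 (by norm_num) (by norm_num) 0 1


lemma ramp_cases (t : ℝ) :
    (ramp t = 0 ∧ t ≤ 1/2) ∨ (ramp t = 2 * t - 1 ∧ 1/2 ≤ t) := by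
  rcases le_total t (1/2) with h | h
  · exact Or.inl ⟨max_eq_left (by linarith), h⟩
  · exact Or.inr ⟨max_eq_right (by linarith), h⟩

set_option maxHeartbeats 40000000 in
lemma key (x01 x02 x10 x12 x20 x21 : ℝ)
    (b1 : 0 ≤ x01) (b1' : x01 ≤ 1) (b2 : 0 ≤ x02) (b2' : x02 ≤ 1)
    (b3 : 0 ≤ x10) (b3' : x10 ≤ 1) (b4 : 0 ≤ x12) (b4' : x12 ≤ 1)
    (b5 : 0 ≤ x20) (b5' : x20 ≤ 1) (b6 : 0 ≤ x21) (b6' : x21 ≤ 1)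
    (hu0 : 0 ≤ 4 * ramp x10 + 9 * ramp x20 - (2 * x01 + 8 * x02 + 20 * pen (x01 + x02)))
    (hu1 : 0 ≤ 4 * ramp x01 + 7 * ramp x21 - (3 * x10 + 5 * x12 + 20 * pen (x10 + x12)))
    (hu2 : 0 ≤ 6 * ramp x02 + 5 * ramp x12 - (4 * x20 + 4 * x21 + 20 * pen (x20 + x21)))
    (hd0 : 2 ≤ 4 * ramp x10 + 9 * ramp x20 - (2 * x01 + 8 * x02 + 20 * pen (x01 + x02)) ∨
           1 ≤ 4 * ramp x01 + 7 * ramp x21 - (3 * x10 + 5 * x12 + 20 * pen (x10 + x12)))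
    (hd1 : 2 ≤ 4 * ramp x01 + 7 * ramp x21 - (3 * x10 + 5 * x12 + 20 * pen (x10 + x12)) ∨
           1 ≤ 6 * ramp x02 + 5 * ramp x12 - (4 * x20 + 4 * x21 + 20 * pen (x20 + x21)))
    (hd2 : 2 ≤ 6 * ramp x02 + 5 * ramp x12 - (4 * x20 + 4 * x21 + 20 * pen (x20 + x21)) ∨
           1 ≤ 4 * ramp x10 + 9 * ramp x20 - (2 * x01 + 8 * x02 + 20 * pen (x01 + x02))) :
    False := by
  have q0a := pen_nonneg (x01 + x02)
  have q0b := pen_ge (x01 + x02)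
  have q1a := pen_nonneg (x10 + x12)
  have q1b := pen_ge (x10 + x12)
  have q2a := pen_nonneg (x20 + x21)
  have q2b := pen_ge (x20 + x21)
  rcases ramp_cases x01 with ⟨e1, f1⟩ | ⟨e1, f1⟩ <;>
  rcases ramp_cases x02 with ⟨e2, f2⟩ | ⟨e2, f2⟩ <;>
  rcases ramp_cases x10 with ⟨e3, f3⟩ | ⟨e3, f3⟩ <;>
  rcases ramp_cases x12 with ⟨e4, f4⟩ | ⟨e4, f4⟩ <;>
  rcases ramp_cases x20 with ⟨e5, f5⟩ | ⟨e5, f5⟩ <;>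
  rcases ramp_cases x21 with ⟨e6, f6⟩ | ⟨e6, f6⟩ <;>
  rcases hd0 with d0 | d0 <;>
  rcases hd1 with d1 | d1 <;>
  rcases hd2 with d2 | d2 <;>
  linarith


def yp (i0 j0 : Fin 3) : Fin 3 → Fin 3 → ℝ :=
  fun i j => if (i = i0 ∧ j = j0) ∨ (i = j0 ∧ j = i0) then 1 else 0

lemma yp_exchange (i0 j0 : Fin 3) (h : i0 ≠ j0) : IsExchange (yp i0 j0) := by
  constructor
  · intro i j
    unfold yp
    split <;> norm_num
  · intro i
    unfold yp
    rw [if_neg]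
    rintro (⟨rfl, rfl⟩ | ⟨rfl, rfl⟩) <;> exact h rfl

lemma yp_over (i0 j0 : Fin 3) (h : i0 ≠ j0) :
    IsExchangeOver {i0, j0} (yp i0 j0) := by
  refine ⟨yp_exchange i0 j0 h, ?_⟩
  intro i j hij
  unfold yp
  rw [if_neg]
  rintro (⟨rfl, rfl⟩ | ⟨rfl, rfl⟩) <;>
    rcases hij with hij | hij <;> simp at hij

lemma u01_0 : utility Pf Cf (yp 0 1) 0 = 2 := by
  have h1 : incoming (yp 0 1) 0 = ![0, 1, 0] := by
    funext j
    fin_cases j <;> simp [incoming, yp]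
  have h2 : outgoing (yp 0 1) 0 = ![0, 1, 0] := by
    funext j
    fin_cases j <;> simp [outgoing, yp]
  rw [utility, h1, h2, Pf0, Cf0]
  norm_num [ramp, pen, Matrix.cons_val_two, Matrix.vecHead, Matrix.vecTail]

lemma u01_1 : utility Pf Cf (yp 0 1) 1 = 1 := by
  have h1 : incoming (yp 0 1) 1 = ![1, 0, 0] := by
    funext j
    fin_cases j <;> simp [incoming, yp]
  have h2 : outgoing (yp 0 1) 1 = ![1, 0, 0] := by
    funext j
    fin_cases j <;> simp [outgoing, yp]
  rw [utility, h1, h2, Pf1, Cf1]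
  norm_num [ramp, pen, Matrix.cons_val_two, Matrix.vecHead, Matrix.vecTail]

lemma u12_1 : utility Pf Cf (yp 1 2) 1 = 2 := by
  have h1 : incoming (yp 1 2) 1 = ![0, 0, 1] := by
    funext j
    fin_cases j <;> simp [incoming, yp]
  have h2 : outgoing (yp 1 2) 1 = ![0, 0, 1] := by
    funext j
    fin_cases j <;> simp [outgoing, yp]
  rw [utility, h1, h2, Pf1, Cf1]
  norm_num [ramp, pen, Matrix.cons_val_two, Matrix.vecHead, Matrix.vecTail]

lemma u12_2 : utility Pf Cf (yp 1 2) 2 = 1 := by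
  have h1 : incoming (yp 1 2) 2 = ![0, 1, 0] := by
    funext j
    fin_cases j <;> simp [incoming, yp]
  have h2 : outgoing (yp 1 2) 2 = ![0, 1, 0] := by
    funext j
    fin_cases j <;> simp [outgoing, yp]
  rw [utility, h1, h2, Pf2, Cf2]
  norm_num [ramp, pen, Matrix.cons_val_two, Matrix.vecHead, Matrix.vecTail]

lemma u20_2 : utility Pf Cf (yp 2 0) 2 = 2 := by
  have h1 : incoming (yp 2 0) 2 = ![1, 0, 0] := by
    funext j
    fin_cases j <;> simp [incoming, yp]
  have h2 : outgoing (yp 2 0) 2 = ![1, 0, 0] := by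
    funext j
    fin_cases j <;> simp [outgoing, yp]
  rw [utility, h1, h2, Pf2, Cf2]
  norm_num [ramp, pen, Matrix.cons_val_two, Matrix.vecHead, Matrix.vecTail]

lemma u20_0 : utility Pf Cf (yp 2 0) 0 = 1 := by
  have h1 : incoming (yp 2 0) 0 = ![0, 0, 1] := by
    funext j
    fin_cases j <;> simp [incoming, yp]
  have h2 : outgoing (yp 2 0) 0 = ![0, 0, 1] := by
    funext j
    fin_cases j <;> simp [outgoing, yp]
  rw [utility, h1, h2, Pf0, Cf0]
  norm_num [ramp, pen, Matrix.cons_val_two, Matrix.vecHead, Matrix.vecTail]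

lemma utility_zero (i : Fin 3) : utility Pf Cf (0 : Fin 3 → Fin 3 → ℝ) i = 0 := by
  have h1 : incoming (0 : Fin 3 → Fin 3 → ℝ) i = 0 := rfl
  have h2 : outgoing (0 : Fin 3 → Fin 3 → ℝ) i = 0 := rfl
  rw [utility, h1, h2, Pf_zero, Cf_zero]
  ring

theorem no_core_stable : ¬ ∃ x : Fin 3 → Fin 3 → ℝ, IsExchange x ∧ CoreStable Pf Cf x := by
  rintro ⟨x, hex, hcs⟩
  have hnn : ∀ i : Fin 3, 0 ≤ utility Pf Cf x i := by
    intro i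
    by_contra hlt
    push_neg at hlt
    apply hcs
    refine ⟨{i}, 0, Set.singleton_nonempty i,
      ⟨⟨fun a b => by norm_num, fun a => rfl⟩, fun a b _ => rfl⟩, ?_⟩
    intro j hj
    rw [Set.mem_singleton_iff] at hj
    subst hj
    rw [utility_zero]
    exact hlt
  have hp01 : 2 ≤ utility Pf Cf x 0 ∨ 1 ≤ utility Pf Cf x 1 := by
    by_contra hc
    push_neg at hc
    apply hcs
    refine ⟨{0, 1}, yp 0 1, ⟨0, by simp⟩, yp_over 0 1 (by decide), ?_⟩
    intro j hj
    rcases hj with rfl | hj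
    · rw [u01_0]; exact hc.1
    · rw [Set.mem_singleton_iff] at hj
      subst hj
      rw [u01_1]; exact hc.2
  have hp12 : 2 ≤ utility Pf Cf x 1 ∨ 1 ≤ utility Pf Cf x 2 := by
    by_contra hc
    push_neg at hc
    apply hcs
    refine ⟨{1, 2}, yp 1 2, ⟨1, by simp⟩, yp_over 1 2 (by decide), ?_⟩
    intro j hj
    rcases hj with rfl | hj
    · rw [u12_1]; exact hc.1
    · rw [Set.mem_singleton_iff] at hj
      subst hj
      rw [u12_2]; exact hc.2
  have hp20 : 2 ≤ utility Pf Cf x 2 ∨ 1 ≤ utility Pf Cf x 0 := by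
    by_contra hc
    push_neg at hc
    apply hcs
    refine ⟨{2, 0}, yp 2 0, ⟨2, by simp⟩, yp_over 2 0 (by decide), ?_⟩
    intro j hj
    rcases hj with rfl | hj
    · rw [u20_2]; exact hc.1
    · rw [Set.mem_singleton_iff] at hj
      subst hj
      rw [u20_0]; exact hc.2
  have E0 : utility Pf Cf x 0 =
      4 * ramp (x 1 0) + 9 * ramp (x 2 0) -
        (2 * x 0 1 + 8 * x 0 2 + 20 * pen (x 0 1 + x 0 2)) := by
    have h00 : x 0 0 = 0 := hex.2 0
    simp only [utility, Pf0, Cf0, incoming, outgoing, h00]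
    ring_nf
  have E1 : utility Pf Cf x 1 =
      4 * ramp (x 0 1) + 7 * ramp (x 2 1) -
        (3 * x 1 0 + 5 * x 1 2 + 20 * pen (x 1 0 + x 1 2)) := by
    have h11 : x 1 1 = 0 := hex.2 1
    simp only [utility, Pf1, Cf1, incoming, outgoing, h11]
    ring_nf
  have E2 : utility Pf Cf x 2 =
      6 * ramp (x 0 2) + 5 * ramp (x 1 2) -
        (4 * x 2 0 + 4 * x 2 1 + 20 * pen (x 2 0 + x 2 1)) := by
    have h22 : x 2 2 = 0 := hex.2 2
    simp only [utility, Pf2, Cf2, incoming, outgoing, h22]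
    ring_nf
  have n0 := hnn 0
  have n1 := hnn 1
  have n2 := hnn 2
  rw [E0] at n0 hp01 hp20
  rw [E1] at n1 hp01 hp12
  rw [E2] at n2 hp12 hp20
  exact key (x 0 1) (x 0 2) (x 1 0) (x 1 2) (x 2 0) (x 2 1)
    (hex.1 0 1).1 (hex.1 0 1).2 (hex.1 0 2).1 (hex.1 0 2).2
    (hex.1 1 0).1 (hex.1 1 0).2 (hex.1 1 2).1 (hex.1 1 2).2
    (hex.1 2 0).1 (hex.1 2 0).2 (hex.1 2 1).1 (hex.1 2 1).2
    n0 n1 n2 hp01 hp12 hp20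


/-- There is a three-agent instance with continuous, convex, monotone
payoffs vanishing at `0` and continuous, convex, monotone costs vanishing at `0` that admits
no core-stable data exchange: relaxing concavity of payoffs can destroy existence. -/
theorem exists_instance_convex_payoff_no_core_stable :
    ∃ p c : Fin 3 → (Fin 3 → ℝ) → ℝ,
      (∀ i, ContinuousOn (p i) (box 3)) ∧
      (∀ i, ConvexOn ℝ (box 3) (p i)) ∧
      (∀ i, MonotoneOnBox (p i)) ∧
      (∀ i, ∀ a ∈ box 3, 0 ≤ p i a) ∧
      (∀ i, p i 0 = 0) ∧
      (∀ i, ContinuousOn (c i) (box 3)) ∧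
      (∀ i, ConvexOn ℝ (box 3) (c i)) ∧
      (∀ i, MonotoneOnBox (c i)) ∧
      (∀ i, ∀ a ∈ box 3, 0 ≤ c i a) ∧
      (∀ i, c i 0 = 0) ∧
      ¬ ∃ x : Fin 3 → Fin 3 → ℝ, IsExchange x ∧ CoreStable p c x :=
  ⟨Pf, Cf, Pf_cont, Pf_convex, Pf_mono, Pf_nonneg, Pf_zero,
    Cf_cont, Cf_convex, Cf_mono, Cf_nonneg, Cf_zero, no_core_stable⟩

end DataExchange
end

section
/- Suppose every payoff function p_i and every cost function c_i is continuous and monotone. Then for every S ⊆ [n] the set V(S) = { (u_1(x), …, u_n(x)) ∈ ℝ^n : x is an exchange over S and u_i(x) ≥ 0 for all i } is comprehensive on the nonnegative orthant: if u ∈ V(S) and y ∈ ℝ^n satisfies 0 ≤ y_i ≤ u_i for every i ∈ [n], then y ∈ V(S). -/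
open scoped BigOperators

namespace DataExchange

/-- The set `V(S)` of nonnegative utility vectors attainable by exchanges over `S`. -/
def VSet {n : ℕ} (p c : Fin n → (Fin n → ℝ) → ℝ) (S : Set (Fin n)) : Set (Fin n → ℝ) :=
  {u | ∃ x : Fin n → Fin n → ℝ, IsExchangeOver S x ∧ (∀ i, 0 ≤ utility p c x i) ∧
    u = fun i => utility p c x i}

lemma mem_box {n : ℕ} {a : Fin n → ℝ} (h : ∀ j, 0 ≤ a j ∧ a j ≤ 1) : a ∈ box n :=
  Set.mem_Icc.mpr ⟨fun j => (h j).1, fun j => (h j).2⟩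

/-- payoff of `i` when incoming bundle is scaled by `s`. -/
def hcurve {n : ℕ} (p : Fin n → (Fin n → ℝ) → ℝ) (x : Fin n → Fin n → ℝ)
    (i : Fin n) (s : ℝ) : ℝ := p i (fun j => s * x j i)

/-- Candidate scaling factors achieving payoff at least `r`. -/
def Aset {n : ℕ} (p : Fin n → (Fin n → ℝ) → ℝ) (x : Fin n → Fin n → ℝ)
    (i : Fin n) (r : ℝ) : Set ℝ :=
  Set.Icc 0 1 ∩ (hcurve p x i) ⁻¹' Set.Ici r

/-- Target payoff for agent `i` given receiver scalings `t`. -/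
def gfun {n : ℕ} (c : Fin n → (Fin n → ℝ) → ℝ) (x : Fin n → Fin n → ℝ)
    (y : Fin n → ℝ) (t : Fin n → ℝ) (i : Fin n) : ℝ :=
  y i + c i (fun j => t j * x i j)

/-- The scaling update map whose fixed point yields utilities exactly `y`. -/
noncomputable def phi {n : ℕ} (p c : Fin n → (Fin n → ℝ) → ℝ) (x : Fin n → Fin n → ℝ)
    (y : Fin n → ℝ) (t : Fin n → ℝ) (i : Fin n) : ℝ :=
  sInf (Aset p x i (gfun c x y t i))

/-- If all payoff and cost functions are continuous and monotone, then each
`V(S)` is comprehensive on the nonnegative orthant: if `u ∈ V(S)` and `0 ≤ y ≤ u`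
coordinatewise, then `y ∈ V(S)`. -/
theorem VSet_comprehensive (n : ℕ) (p c : Fin n → (Fin n → ℝ) → ℝ)
    (hp_cont : ∀ i, ContinuousOn (p i) (box n))
    (hp_mono : ∀ i, MonotoneOnBox (p i))
    (hp_nonneg : ∀ i, ∀ a ∈ box n, 0 ≤ p i a)
    (hp_zero : ∀ i, p i 0 = 0)
    (hc_cont : ∀ i, ContinuousOn (c i) (box n))
    (hc_mono : ∀ i, MonotoneOnBox (c i))
    (hc_nonneg : ∀ i, ∀ a ∈ box n, 0 ≤ c i a)
    (hc_zero : ∀ i, c i 0 = 0)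
    (S : Set (Fin n)) (u y : Fin n → ℝ)
    (hu : u ∈ VSet p c S) (hy : ∀ i, 0 ≤ y i ∧ y i ≤ u i) :
    y ∈ VSet p c S := by
  obtain ⟨x, ⟨⟨hx01, hxdiag⟩, hxS0⟩, hxnn, huu⟩ := hu
  -- basic box memberships
  have hin_box : ∀ i, incoming x i ∈ box n := fun i => mem_box fun j => hx01 j i
  have hscale_in_box : ∀ i, ∀ s ∈ Set.Icc (0:ℝ) 1, (fun j => s * x j i) ∈ box n := by
    intro i s hs
    exact mem_box fun j => ⟨mul_nonneg hs.1 (hx01 j i).1,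
      mul_le_one₀ hs.2 (hx01 j i).1 (hx01 j i).2⟩
  have hscale_out_box : ∀ (t : Fin n → ℝ), (∀ j, t j ∈ Set.Icc (0:ℝ) 1) →
      ∀ i, (fun j => t j * x i j) ∈ box n := by
    intro t ht i
    exact mem_box fun j => ⟨mul_nonneg (ht j).1 (hx01 i j).1,
      mul_le_one₀ (ht j).2 (hx01 i j).1 (hx01 i j).2⟩
  -- properties of hcurve
  have hcurve0 : ∀ i, hcurve p x i 0 = 0 := by
    intro i
    show p i (fun j => (0:ℝ) * x j i) = 0
    have : (fun j : Fin n => (0:ℝ) * x j i) = (0 : Fin n → ℝ) := funext fun j => zero_mul _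
    rw [this]; exact hp_zero i
  have hcurve1 : ∀ i, hcurve p x i 1 = p i (incoming x i) := by
    intro i
    show p i (fun j => (1:ℝ) * x j i) = p i (incoming x i)
    have : (fun j : Fin n => (1:ℝ) * x j i) = incoming x i := funext fun j => one_mul _
    rw [this]
  have hcurve_mono : ∀ i, ∀ s ∈ Set.Icc (0:ℝ) 1, ∀ s' ∈ Set.Icc (0:ℝ) 1, s ≤ s' →
      hcurve p x i s ≤ hcurve p x i s' := by
    intro i s hs s' hs' hss
    exact hp_mono i _ (hscale_in_box i s hs) _ (hscale_in_box i s' hs')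
      (fun j => mul_le_mul_of_nonneg_right hss (hx01 j i).1)
  have hcurve_cont : ∀ i, ContinuousOn (hcurve p x i) (Set.Icc 0 1) := by
    intro i
    refine (hp_cont i).comp (Continuous.continuousOn ?_) (fun s hs => hscale_in_box i s hs)
    exact continuous_pi fun j => continuous_id.mul continuous_const
  -- properties of Aset
  have hAbdd : ∀ i r, BddBelow (Aset p x i r) := fun i r =>
    ⟨0, fun s hs => hs.1.1⟩
  have hA1mem : ∀ i r, r ≤ p i (incoming x i) → (1:ℝ) ∈ Aset p x i r := by
    intro i r hr
    exact ⟨⟨zero_le_one, le_refl 1⟩, by simpa [hcurve1 i] using hr⟩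
  have hAclosed : ∀ i r, IsClosed (Aset p x i r) :=
    fun i r => (hcurve_cont i).preimage_isClosed_of_isClosed isClosed_Icc isClosed_Ici
  -- the key property of sInf (Aset p x i r)
  have hkey : ∀ i r, 0 ≤ r → r ≤ p i (incoming x i) →
      sInf (Aset p x i r) ∈ Set.Icc (0:ℝ) 1 ∧ hcurve p x i (sInf (Aset p x i r)) = r := by
    intro i r hr0 hr1
    have hne : (Aset p x i r).Nonempty := ⟨1, hA1mem i r hr1⟩
    have hmem := (hAclosed i r).csInf_mem hne (hAbdd i r)
    obtain ⟨hIcc, hge⟩ := hmem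
    refine ⟨hIcc, le_antisymm ?_ hge⟩
    -- IVT point
    have hiv : r ∈ hcurve p x i '' Set.Icc 0 1 := by
      apply intermediate_value_Icc zero_le_one (hcurve_cont i)
      rw [hcurve0 i, hcurve1 i]
      exact ⟨hr0, hr1⟩
    obtain ⟨s₀, hs₀Icc, hs₀⟩ := hiv
    have hs₀mem : s₀ ∈ Aset p x i r := ⟨hs₀Icc, le_of_eq hs₀.symm⟩
    have : sInf (Aset p x i r) ≤ s₀ := csInf_le (hAbdd i r) hs₀mem
    calc hcurve p x i (sInf (Aset p x i r)) ≤ hcurve p x i s₀ :=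
          hcurve_mono i _ hIcc _ hs₀Icc this
      _ = r := hs₀
  -- bounds on gfun for t in the box
  have hg_bounds : ∀ (t : Fin n → ℝ), (∀ j, t j ∈ Set.Icc (0:ℝ) 1) → ∀ i,
      0 ≤ gfun c x y t i ∧ gfun c x y t i ≤ p i (incoming x i) := by
    intro t ht i
    constructor
    · exact add_nonneg (hy i).1 (hc_nonneg i _ (hscale_out_box t ht i))
    · have hout : outgoing x i ∈ box n := mem_box fun j => hx01 i j
      have hcle : c i (fun j => t j * x i j) ≤ c i (outgoing x i) :=
        hc_mono i _ (hscale_out_box t ht i) _ hout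
          (fun j => mul_le_of_le_one_left (hx01 i j).1 (ht j).2)
      have hyu : y i ≤ p i (incoming x i) - c i (outgoing x i) := by
        have := (hy i).2
        rw [huu] at this
        exact this
      have : gfun c x y t i ≤ (p i (incoming x i) - c i (outgoing x i)) + c i (outgoing x i) :=
        add_le_add hyu hcle
      linarith
  -- phi maps the box into itself
  have hphi_box : ∀ (t : Fin n → ℝ), (∀ j, t j ∈ Set.Icc (0:ℝ) 1) →
      ∀ i, phi p c x y t i ∈ Set.Icc (0:ℝ) 1 := by
    intro t ht i
    exact (hkey i _ (hg_bounds t ht i).1 (hg_bounds t ht i).2).1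
  -- phi is monotone
  have hphi_mono : ∀ (t t' : Fin n → ℝ), (∀ j, t j ∈ Set.Icc (0:ℝ) 1) →
      (∀ j, t' j ∈ Set.Icc (0:ℝ) 1) → (∀ j, t j ≤ t' j) →
      ∀ i, phi p c x y t i ≤ phi p c x y t' i := by
    intro t t' ht ht' htt i
    have hg : gfun c x y t i ≤ gfun c x y t' i := by
      have := hc_mono i _ (hscale_out_box t ht i) _ (hscale_out_box t' ht' i)
        (fun j => mul_le_mul_of_nonneg_right (htt j) (hx01 i j).1)
      exact add_le_add (le_refl _) this
    refine csInf_le_csInf (hAbdd i _) ⟨1, hA1mem i _ (hg_bounds t' ht' i).2⟩ ?_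
    intro s hs
    exact ⟨hs.1, le_trans hg hs.2⟩
  -- Tarski-style fixed point
  set T : Set (Fin n → ℝ) :=
    {t | (∀ j, t j ∈ Set.Icc (0:ℝ) 1) ∧ ∀ i, t i ≤ phi p c x y t i} with hT
  have h0T : (0 : Fin n → ℝ) ∈ T := by
    constructor
    · intro j; exact ⟨le_refl 0, zero_le_one⟩
    · intro i
      exact (hphi_box 0 (fun j => ⟨le_refl 0, zero_le_one⟩) i).1
  set tstar : Fin n → ℝ := fun i => sSup ((fun t => t i) '' T) with htstar
  have hSne : ∀ i, ((fun t : Fin n → ℝ => t i) '' T).Nonempty :=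
    fun i => ⟨0, 0, h0T, rfl⟩
  have hSbdd : ∀ i, BddAbove ((fun t : Fin n → ℝ => t i) '' T) := by
    intro i
    exact ⟨1, fun b ⟨t, htT, hb⟩ => hb ▸ (htT.1 i).2⟩
  have htstar_box : ∀ j, tstar j ∈ Set.Icc (0:ℝ) 1 := by
    intro j
    constructor
    · exact le_csSup (hSbdd j) ⟨0, h0T, rfl⟩
    · exact csSup_le (hSne j) (fun b ⟨t, htT, hb⟩ => hb ▸ (htT.1 j).2)
  have hle_tstar : ∀ t ∈ T, ∀ j, t j ≤ tstar j :=
    fun t htT j => le_csSup (hSbdd j) ⟨t, htT, rfl⟩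
  have hstep1 : ∀ i, tstar i ≤ phi p c x y tstar i := by
    intro i
    refine csSup_le (hSne i) ?_
    rintro b ⟨t, htT, rfl⟩
    exact (htT.2 i).trans (hphi_mono t tstar htT.1 htstar_box (hle_tstar t htT) i)
  have hstep2 : phi p c x y tstar ∈ T := by
    refine ⟨hphi_box tstar htstar_box, ?_⟩
    intro i
    exact hphi_mono tstar _ htstar_box (hphi_box tstar htstar_box) hstep1 i
  have hfix : ∀ i, phi p c x y tstar i = tstar i :=
    fun i => le_antisymm (hle_tstar _ hstep2 i) (hstep1 i)
  -- the witness exchange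
  refine ⟨fun i j => tstar j * x i j, ⟨⟨?_, ?_⟩, ?_⟩, ?_, ?_⟩
  · intro i j
    exact ⟨mul_nonneg (htstar_box j).1 (hx01 i j).1,
      mul_le_one₀ (htstar_box j).2 (hx01 i j).1 (hx01 i j).2⟩
  · intro i; show tstar i * x i i = 0; rw [hxdiag i, mul_zero]
  · intro i j hij; show tstar j * x i j = 0; rw [hxS0 i j hij, mul_zero]
  all_goals {
    have hutil : ∀ i, utility p c (fun i j => tstar j * x i j) i = y i := by
      intro i
      have hk := hkey i (gfun c x y tstar i) (hg_bounds tstar htstar_box i).1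
        (hg_bounds tstar htstar_box i).2
      have hinc : incoming (fun i j => tstar j * x i j) i = fun j => tstar i * x j i := rfl
      have hout : outgoing (fun i j => tstar j * x i j) i = fun j => tstar j * x i j := rfl
      have hp_eq : p i (incoming (fun i j => tstar j * x i j) i) = gfun c x y tstar i := by
        have h2 : hcurve p x i (phi p c x y tstar i) = gfun c x y tstar i := hk.2
        rw [hfix i] at h2
        exact h2
      show p i (incoming (fun i j => tstar j * x i j) i)
          - c i (outgoing (fun i j => tstar j * x i j) i) = y i
      rw [hp_eq]
      show y i + c i (fun j => tstar j * x i j) - c i (fun j => tstar j * x i j) = y i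
      ring
    first
    | exact fun i => (hutil i) ▸ (hy i).1
    | exact funext fun i => (hutil i).symm }

end DataExchange
end

section
/- Suppose every payoff function p_i is concave and every cost function c_i is convex, so each utility u_i is a concave function of the matrix x. Let T be a collection of subsets of [n] with nonnegative weights (δ_S)_{S∈T} such that Σ_{S∈T : i∈S} δ_S = 1 for every i ∈ [n] (a balanced collection). Let w ∈ ℝ^n be a target utility vector and suppose that for every S ∈ T there is an exchange x^S over S with u_i(x^S) ≥ w_i for every i ∈ S. Define x by x_{i,j} = Σ_{S∈T : i∈S} δ_S · x^S_{i,j}. Then x is a valid data exchange (all entries lie in [0,1]) and u_i(x) ≥ w_i for every i ∈ [n]; i.e., the data-exchange game is balanced. -/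
open scoped BigOperators

namespace DataExchange

variable {n : ℕ}

theorem IsExchangeOver.apply_eq_zero_of_notMem_left {U : Set (Fin n)} {x : Fin n → Fin n → ℝ}
    (hx : IsExchangeOver U x) {i : Fin n} (hi : i ∉ U) (j : Fin n) : x i j = 0 :=
  hx.2 i j (Or.inl hi)

theorem IsExchangeOver.apply_eq_zero_of_notMem_right {U : Set (Fin n)} {x : Fin n → Fin n → ℝ}
    (hx : IsExchangeOver U x) {j : Fin n} (hj : j ∉ U) (i : Fin n) : x i j = 0 :=
  hx.2 i j (Or.inr hj)

/-- Both sums equal the sum over all of `T`, since `xs S i j = 0` unless `i, j ∈ S`. -/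
theorem sum_filter_mem_left_eq_sum_filter_mem_right {T : Finset (Finset (Fin n))}
    {xs : Finset (Fin n) → Fin n → Fin n → ℝ} (hxs : ∀ S ∈ T, IsExchangeOver (↑S) (xs S))
    (f : Finset (Fin n) → ℝ) (i j : Fin n) :
    ∑ S ∈ T.filter (i ∈ ·), f S * xs S i j = ∑ S ∈ T.filter (j ∈ ·), f S * xs S i j := by
  rw [Finset.sum_filter_of_ne, Finset.sum_filter_of_ne]
  · intro S hS hne
    by_contra hj
    exact hne (by rw [(hxs S hS).apply_eq_zero_of_notMem_right (by simpa using hj), mul_zero])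
  · intro S hS hne
    by_contra hi
    exact hne (by rw [(hxs S hS).apply_eq_zero_of_notMem_left (by simpa using hi), mul_zero])

theorem utility_congr {p c : Fin n → (Fin n → ℝ) → ℝ} {x y : Fin n → Fin n → ℝ} {i : Fin n}
    (hin : incoming x i = incoming y i) (hout : outgoing x i = outgoing y i) :
    utility p c x i = utility p c y i := by
  rw [utility, utility, hin, hout]

theorem IsExchange.mem_Icc {x : Fin n → Fin n → ℝ} (hx : IsExchange x) : x ∈ Set.Icc 0 1 :=
  ⟨fun i j => (hx.1 i j).1, fun i j => (hx.1 i j).2⟩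

theorem convex_setOf_isExchange : Convex ℝ {x : Fin n → Fin n → ℝ | IsExchange x} := by
  intro x hx y hy a b ha hb hab
  refine ⟨fun i j => ?_, fun i => ?_⟩
  · exact (convex_Icc (0 : ℝ) 1) (hx.1 i j) (hy.1 i j) ha hb hab
  · simp [hx.2 i, hy.2 i]

theorem incoming_mem_box {x : Fin n → Fin n → ℝ} (hx : x ∈ Set.Icc 0 1) (i : Fin n) :
    incoming x i ∈ box n :=
  ⟨fun j => hx.1 j i, fun j => hx.2 j i⟩

theorem outgoing_mem_box {x : Fin n → Fin n → ℝ} (hx : x ∈ Set.Icc 0 1) (i : Fin n) :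
    outgoing x i ∈ box n :=
  ⟨fun j => hx.1 i j, fun j => hx.2 i j⟩

theorem concaveOn_utility {p c : Fin n → (Fin n → ℝ) → ℝ} {i : Fin n}
    (hp : ConcaveOn ℝ (box n) (p i)) (hc : ConvexOn ℝ (box n) (c i)) :
    ConcaveOn ℝ (Set.Icc 0 1) (fun x => utility p c x i) := by
  refine ⟨convex_Icc 0 1, fun x hx y hy a b ha hb hab => ?_⟩
  have hpay := hp.2 (incoming_mem_box hx i) (incoming_mem_box hy i) ha hb hab
  have hcost := hc.2 (outgoing_mem_box hx i) (outgoing_mem_box hy i) ha hb hab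
  simp only [utility, smul_eq_mul] at hpay hcost ⊢
  change _ ≤ p i (a • incoming x i + b • incoming y i) - c i (a • outgoing x i + b • outgoing y i)
  linarith

/-- **balancedness.** Suppose payoffs are concave and costs are convex on the
box. Let `T` be a balanced collection of coalitions with weights `δ`, let `w` be a target
utility vector, and for each `S ∈ T` let `x^S` be an exchange over `S` attaining `w` on `S`.
Then the weighted combination `x_{i,j} = Σ_{S ∈ T, i ∈ S} δ_S · x^S_{i,j}` is a valid data
exchange and attains `w` for every agent. -/
theorem balanced_game (n : ℕ) (p c : Fin n → (Fin n → ℝ) → ℝ)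
    (hp_conc : ∀ i, ConcaveOn ℝ (box n) (p i))
    (hc_conv : ∀ i, ConvexOn ℝ (box n) (c i))
    (T : Finset (Finset (Fin n))) (δ : Finset (Fin n) → ℝ)
    (hδ : ∀ S ∈ T, 0 ≤ δ S)
    (hbal : ∀ i : Fin n, ∑ S ∈ T.filter (fun S => i ∈ S), δ S = 1)
    (w : Fin n → ℝ)
    (xs : Finset (Fin n) → Fin n → Fin n → ℝ)
    (hxs : ∀ S ∈ T, IsExchangeOver (↑S) (xs S))
    (hws : ∀ S ∈ T, ∀ i ∈ S, w i ≤ utility p c (xs S) i)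
    (x : Fin n → Fin n → ℝ)
    (hx : ∀ i j, x i j = ∑ S ∈ T.filter (fun S => i ∈ S), δ S * xs S i j) :
    IsExchange x ∧ ∀ i, w i ≤ utility p c x i := by
  have hmem : ∀ {i S}, S ∈ T.filter (i ∈ ·) → S ∈ T ∧ i ∈ S := Finset.mem_filter.mp
  -- Agent `i` sees `x` as the convex combination `y i` of the exchanges over the coalitions
  -- containing `i`: the two matrices agree on row `i` and on column `i`.
  set y : Fin n → Fin n → Fin n → ℝ := fun i => ∑ S ∈ T.filter (i ∈ ·), δ S • xs S
  have hδi : ∀ i, ∀ S ∈ T.filter (i ∈ ·), 0 ≤ δ S := fun i S hS => hδ S (hmem hS).1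
  have hy : ∀ i, IsExchange (y i) := fun i =>
    convex_setOf_isExchange.sum_mem (hδi i) (hbal i) fun S hS => (hxs S (hmem hS).1).1
  have hrow : ∀ i j, x i j = y i i j := fun i j => by simp [y, hx, Finset.sum_apply]
  have hcol : ∀ i j, x j i = y i j i := fun i j => by
    simp [y, hx, Finset.sum_apply, sum_filter_mem_left_eq_sum_filter_mem_right hxs δ j i]
  refine ⟨⟨fun i j => hrow i j ▸ (hy i).1 i j, fun i => hrow i i ▸ (hy i).2 i⟩, fun i => ?_⟩
  calc w i = ∑ S ∈ T.filter (i ∈ ·), δ S * w i := by rw [← Finset.sum_mul, hbal i, one_mul]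
    _ ≤ ∑ S ∈ T.filter (i ∈ ·), δ S • utility p c (xs S) i :=
        Finset.sum_le_sum fun S hS =>
          mul_le_mul_of_nonneg_left (hws S (hmem hS).1 i (hmem hS).2) (hδi i S hS)
    _ ≤ utility p c (y i) i :=
        (concaveOn_utility (hp_conc i) (hc_conv i)).le_map_sum (hδi i) (hbal i)
          fun S hS => (hxs S (hmem hS).1).1.mem_Icc
    _ = utility p c x i := utility_congr (funext (hcol i)).symm (funext (hrow i)).symm

end DataExchange
end

section
/- Let 0 < ε < 10^{-3}, d = ε^{-1/4}, H = ε^{-1/2}. Let f₁, f₂, f₃ ≥ 0 with f₁ + f₂ + f₃ ≤ 1. If ((1+ε)/(1−ε)) · ( f₁·(d+H+1) + f₂·(d+H) + f₃·H ) ≥ (1−ε)·(d+H+1), then f₁ ≥ 1 − 10·ε^{1/2}. -/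
/-!
Clearing the factor `(1 + ε) / (1 - ε)` costs a multiplicative `1 - O(ε)`, so the hypothesis forces
`f₁ ≥ 1 - 3ε(1 + d + H)`; each of `ε`, `ε d = ε^{3/4}` and `ε H = ε^{1/2}` is at most `ε^{1/2}`.
-/

theorem mul_rpow_le_rpow_one_half {ε q : ℝ} (hε0 : 0 < ε) (hε1 : ε ≤ 1) (hq : -(1 / 2) ≤ q) :
    ε * ε ^ q ≤ ε ^ ((1 : ℝ) / 2) := by
  rw [mul_comm, ← Real.rpow_add_one hε0.ne']
  exact Real.rpow_le_rpow_of_exponent_ge hε0 hε1 (by linarith)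

theorem weighted_sum_le_add {a b f₁ f₂ f₃ : ℝ} (ha : 0 ≤ a) (hb : 0 ≤ b) (h3 : 0 ≤ f₃)
    (hsum : f₁ + f₂ + f₃ ≤ 1) :
    f₁ * (a + b + 1) + f₂ * (a + b) + f₃ * b ≤ a + b + f₁ := by
  nlinarith [mul_nonneg h3 ha]

theorem one_sub_le_of_le_div_mul {ε S f : ℝ} (hε0 : 0 < ε) (hε1 : ε < 1) (hS : 0 ≤ S)
    (h : (1 - ε) * (S + 1) ≤ (1 + ε) / (1 - ε) * (S + f)) :
    1 - 3 * ε * (1 + S) ≤ f := by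
  rw [div_mul_eq_mul_div, le_div_iff₀ (by linarith)] at h
  have hf : (1 - ε) ^ 2 - (3 * ε - ε ^ 2) * S ≤ (1 + ε) * f := by nlinarith
  have hloss : (1 + ε) * (1 - 3 * ε * (1 + S)) ≤ (1 - ε) ^ 2 - (3 * ε - ε ^ 2) * S := by
    nlinarith [mul_nonneg (sq_nonneg ε) hS]
  exact le_of_mul_le_mul_left (hloss.trans hf) (by linarith)

theorem case_I_favorite_edge_general (ε d H f₁ f₂ f₃ : ℝ)
    (hε0 : 0 < ε) (hε1 : ε < 1/1000)
    (hd : d = ε ^ (-(1:ℝ)/4)) (hH : H = ε ^ (-(1:ℝ)/2))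
    (h3 : 0 ≤ f₃)
    (hsum : f₁ + f₂ + f₃ ≤ 1)
    (hineq : (1 - ε) * (d + H + 1) ≤
      (1 + ε) / (1 - ε) * (f₁ * (d + H + 1) + f₂ * (d + H) + f₃ * H)) :
    1 - 10 * ε ^ ((1:ℝ)/2) ≤ f₁ := by
  have hε : ε < 1 := by linarith
  have hd0 : 0 ≤ d := hd ▸ Real.rpow_nonneg hε0.le _
  have hH0 : 0 ≤ H := hH ▸ Real.rpow_nonneg hε0.le _
  have hf : 1 - 3 * ε * (1 + (d + H)) ≤ f₁ := by
    refine one_sub_le_of_le_div_mul hε0 hε (by positivity) (hineq.trans ?_)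
    have hfactor : 0 ≤ (1 + ε) / (1 - ε) := div_nonneg (by linarith) (by linarith)
    exact mul_le_mul_of_nonneg_left (weighted_sum_le_add hd0 hH0 h3 hsum) hfactor
  have hε_le : ε ≤ ε ^ ((1 : ℝ) / 2) := by
    simpa using mul_rpow_le_rpow_one_half hε0 hε.le (q := 0) (by norm_num)
  have hεd : ε * d ≤ ε ^ ((1 : ℝ) / 2) := hd ▸ mul_rpow_le_rpow_one_half hε0 hε.le (by norm_num)
  have hεH : ε * H ≤ ε ^ ((1 : ℝ) / 2) := hH ▸ mul_rpow_le_rpow_one_half hε0 hε.le (by norm_num)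
  linarith

/-- **Case I.** Let `0 < ε < 10⁻³`, `d = ε^{-1/4}`, `H = ε^{-1/2}`, and let
`f₁, f₂, f₃ ≥ 0` with `f₁ + f₂ + f₃ ≤ 1`. If
`((1+ε)/(1-ε)) · (f₁·(d+H+1) + f₂·(d+H) + f₃·H) ≥ (1-ε)·(d+H+1)`, then
`f₁ ≥ 1 - 10·ε^{1/2}`. -/
theorem case_I_favorite_edge (ε d H f₁ f₂ f₃ : ℝ)
    (hε0 : 0 < ε) (hε1 : ε < 1/1000)
    (hd : d = ε ^ (-(1:ℝ)/4)) (hH : H = ε ^ (-(1:ℝ)/2))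
    (h1 : 0 ≤ f₁) (h2 : 0 ≤ f₂) (h3 : 0 ≤ f₃)
    (hsum : f₁ + f₂ + f₃ ≤ 1)
    (hineq : (1 - ε) * (d + H + 1) ≤
      (1 + ε) / (1 - ε) * (f₁ * (d + H + 1) + f₂ * (d + H) + f₃ * H)) :
    1 - 10 * ε ^ ((1:ℝ)/2) ≤ f₁ :=
  case_I_favorite_edge_general ε d H f₁ f₂ f₃ hε0 hε1 hd hH h3 hsum hineq
end

section
/- Let 0 < ε < 10^{-3}, d = ε^{-1/4}, H = ε^{-1/2}. Let f₁, f₂, f₃ ≥ 0 with f₁ + f₂ + f₃ ≤ 1. If ((1+ε)/(1−ε)) · ( f₁·(d+H+1) + f₂·(d+H) + f₃·H ) ≥ (1−ε)·(d+H), then f₁ + f₂ ≥ 1 − 7·ε^{1/4}. -/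
/-- **Case II.** Let `0 < ε < 10⁻³`, `d = ε^{-1/4}`, `H = ε^{-1/2}`, and let
`f₁, f₂, f₃ ≥ 0` with `f₁ + f₂ + f₃ ≤ 1`. If
`((1+ε)/(1-ε)) · (f₁·(d+H+1) + f₂·(d+H) + f₃·H) ≥ (1-ε)·(d+H)`, then
`f₁ + f₂ ≥ 1 - 7·ε^{1/4}`. -/
theorem case_II_second_favorite_edge (ε d H f₁ f₂ f₃ : ℝ)
    (hε0 : 0 < ε) (hε1 : ε < 1/1000)
    (hd : d = ε ^ (-(1:ℝ)/4)) (hH : H = ε ^ (-(1:ℝ)/2))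
    (h1 : 0 ≤ f₁) (h2 : 0 ≤ f₂) (h3 : 0 ≤ f₃)
    (hsum : f₁ + f₂ + f₃ ≤ 1)
    (hineq : (1 - ε) * (d + H) ≤
      (1 + ε) / (1 - ε) * (f₁ * (d + H + 1) + f₂ * (d + H) + f₃ * H)) :
    1 - 7 * ε ^ ((1:ℝ)/4) ≤ f₁ + f₂ := by
  obtain ⟨x, hx⟩ : ∃ x : ℝ, ε ^ ((1:ℝ)/4) = x := ⟨_, rfl⟩
  rw [hx]
  have hx0 : 0 < x := hx ▸ Real.rpow_pos_of_pos hε0 _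
  have hxε : x ^ 4 = ε := by
    rw [← hx, ← Real.rpow_natCast (ε ^ ((1:ℝ)/4)) 4, ← Real.rpow_mul hε0.le]
    norm_num
  have hdx : d = x⁻¹ := by
    rw [hd, show (-(1:ℝ)/4) = -(1/4) by ring, Real.rpow_neg hε0.le, hx]
  have hHx : H = (x ^ 2)⁻¹ := by
    have h' : H = x⁻¹ * x⁻¹ := by
      rw [hH, show (-(1:ℝ)/2) = (-(1:ℝ)/4) + (-(1:ℝ)/4) by ring, Real.rpow_add hε0,
        show (-(1:ℝ)/4) = -(1/4) by ring, Real.rpow_neg hε0.le, hx]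
    rw [h', sq, mul_inv]
  have hx5 : x < 1/5 := by
    by_contra h
    push_neg at h
    have : (1/5:ℝ)^4 ≤ x^4 := pow_le_pow_left₀ (by norm_num) h 4
    nlinarith
  have hε1' : ε < 1 := by linarith
  have hεpos : 0 < 1 - ε := by linarith
  -- multiply hypothesis by (1 - ε) > 0
  have h' : (1 - ε) * ((1 - ε) * (d + H)) ≤
      (1 + ε) * (f₁ * (d + H + 1) + f₂ * (d + H) + f₃ * H) := by
    have := mul_le_mul_of_nonneg_left hineq hεpos.le
    calc (1 - ε) * ((1 - ε) * (d + H))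
        ≤ (1 - ε) * ((1 + ε) / (1 - ε) * (f₁ * (d + H + 1) + f₂ * (d + H) + f₃ * H)) := this
      _ = (1 + ε) * (f₁ * (d + H + 1) + f₂ * (d + H) + f₃ * H) := by
          field_simp
  rw [hdx, hHx, ← hxε] at h'
  have hx2 : (0:ℝ) < x ^ 2 := by positivity
  have hne : x ≠ 0 := hx0.ne'
  have hkey : (1 - x ^ 4) * ((1 - x ^ 4) * (x + 1)) ≤
      (1 + x ^ 4) * (f₁ * (x + 1 + x ^ 2) + f₂ * (x + 1) + f₃) := by
    have e1 : x ^ 2 * ((1 - x ^ 4) * ((1 - x ^ 4) * (x⁻¹ + (x ^ 2)⁻¹))) =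
        (1 - x ^ 4) * ((1 - x ^ 4) * (x + 1)) := by
      field_simp
    have e2 : x ^ 2 * ((1 + x ^ 4) *
        (f₁ * (x⁻¹ + (x ^ 2)⁻¹ + 1) + f₂ * (x⁻¹ + (x ^ 2)⁻¹) + f₃ * (x ^ 2)⁻¹)) =
        (1 + x ^ 4) * (f₁ * (x + 1 + x ^ 2) + f₂ * (x + 1) + f₃) := by
      field_simp
    rw [← e1, ← e2]
    exact mul_le_mul_of_nonneg_left h' hx2.le
  clear hineq hd hH hdx hHx h' hx hxε hε1 hε0 hεpos hε1'
  by_contra hcon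
  push_neg at hcon
  have hxx : 0 < x ^ 2 + x := by positivity
  have hstep : f₁ * (x + 1 + x ^ 2) + f₂ * (x + 1) + f₃ < (1 - 7 * x) * (x ^ 2 + x) + 1 := by
    have hmul := mul_lt_mul_of_pos_right hcon hxx
    nlinarith [mul_nonneg h2 hx2.le]
  have hpos : (0:ℝ) < 1 + x ^ 4 := by positivity
  have hlt := lt_of_le_of_lt hkey (mul_lt_mul_of_pos_left hstep hpos)
  have hx2b : x ^ 2 < 1 / 25 := by nlinarith
  have h4 : x ^ 4 < x ^ 2 * (1 / 25) := by nlinarith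
  have h5 : x ^ 5 < x ^ 2 * (1 / 125) := by nlinarith [mul_pos hx0 hx2]
  have hD : 0 < 6 * x ^ 2 + 7 * x ^ 3 - 3 * x ^ 4 - 3 * x ^ 5 + 6 * x ^ 6 + 7 * x ^ 7
      + x ^ 8 + x ^ 9 := by
    have h3p : 0 < x ^ 3 := pow_pos hx0 3
    have h6p : 0 < x ^ 6 := pow_pos hx0 6
    have h7p : 0 < x ^ 7 := pow_pos hx0 7
    have h8p : 0 < x ^ 8 := pow_pos hx0 8
    have h9p : 0 < x ^ 9 := pow_pos hx0 9
    linarith [hx2, h4, h5]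
  nlinarith [hlt, hD]
end
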